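/- Let I ⊆ ℝ be an open interval, ŝ₀ ∈ I, and let Y₀, Z₀ ∈ ℂ^{n×n} with Y₀ invertible such that H₀ := Z₀Y₀⁻¹ is symmetric with Im H₀ positive definite. Suppose Y, Z : I → ℂ^{n×n} are differentiable and satisfy Y'(s) = C Z(s) and Z'(s) = −D(s) Y(s) for all s ∈ I, with Y(ŝ₀) = Y₀ and Z(ŝ₀) = Z₀, and suppose Y(s) is invertible for every s ∈ I. Then for all s ∈ I, det(Im(Z(s)Y(s)⁻¹)) · |det Y(s)|² = det(Im H₀) · |det Y₀|². -/

import Mathlib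

open Matrix

attribute [local instance] Matrix.normedAddCommGroup Matrix.normedSpace

/-- The constant `n × n` matrix `C` with `C₁₁ = 0`, `C_jj = 2` for `j = 2, …, n`
and `C_jk = 0` off the diagonal (indices in `Fin n`, where `0 : Fin n`
corresponds to the index `1`). -/
def riccatiC (n : ℕ) : Matrix (Fin n) (Fin n) ℂ :=
  Matrix.of fun j k => if j = k ∧ (j : ℕ) ≠ 0 then 2 else 0

/-! Since `C` and `D(s)` are real symmetric, the system `Y' = C Z`, `Z' = -D Y` is Hamiltonian:
both `Yᵀ Z - Zᵀ Y` and `Yᴴ Z - Zᴴ Y` have zero derivative, so they are constant on the interval.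
The first vanishes at `ŝ₀` because `H₀` is symmetric, hence `H(s) = Z(s) Y(s)⁻¹` stays symmetric.
For symmetric `H` one has `Yᴴ Z - Zᴴ Y = Yᴴ (H - H̄) Y = 2i Yᴴ (Im H) Y`, whose determinant is
`(2i)ⁿ det (Im H) |det Y|²`; constancy of the second form gives the claim. -/

section Calculus

variable {𝕜 𝔸 : Type*} [NontriviallyNormedField 𝕜] [NormedRing 𝔸] [NormedAlgebra 𝕜 𝔸]
  {l m p : Type*} [Fintype m] [Fintype p] {x : 𝕜}

theorem HasDerivAt.matrix_mul {f : 𝕜 → Matrix l m 𝔸} {g : 𝕜 → Matrix m p 𝔸}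
    {f' : Matrix l m 𝔸} {g' : Matrix m p 𝔸} (hf : HasDerivAt f f' x) (hg : HasDerivAt g g' x) :
    HasDerivAt (fun t => f t * g t) (f' * g x + f x * g') x := by
  refine hasDerivAt_pi.2 fun i => hasDerivAt_pi.2 fun k => ?_
  have hfe (i j) := hasDerivAt_pi.1 (hasDerivAt_pi.1 hf i) j
  have hge (i j) := hasDerivAt_pi.1 (hasDerivAt_pi.1 hg i) j
  simpa only [Matrix.add_apply, mul_apply, Finset.sum_add_distrib] using
    HasDerivAt.fun_sum fun j _ => (hfe i j).fun_mul (hge j k)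

theorem HasDerivAt.matrix_transpose {f : 𝕜 → Matrix m p 𝔸} {f' : Matrix m p 𝔸}
    (hf : HasDerivAt f f' x) : HasDerivAt (fun t => (f t)ᵀ) f'ᵀ x :=
  hasDerivAt_pi.2 fun i => hasDerivAt_pi.2 fun j => hasDerivAt_pi.1 (hasDerivAt_pi.1 hf j) i

theorem HasDerivAt.matrix_conjTranspose [StarRing 𝕜] [TrivialStar 𝕜] [StarRing 𝔸]
    [StarModule 𝕜 𝔸] [ContinuousStar 𝔸] {f : 𝕜 → Matrix m p 𝔸} {f' : Matrix m p 𝔸}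
    (hf : HasDerivAt f f' x) :
    HasDerivAt (fun t => (f t)ᴴ) f'ᴴ x :=
  hasDerivAt_pi.2 fun i => hasDerivAt_pi.2 fun j => (hasDerivAt_pi.1 (hasDerivAt_pi.1 hf j) i).star

end Calculus

section Wronskian

variable {m R : Type*} [Fintype m] [NormedCommRing R] [NormedAlgebra ℝ R]
  {Y Z : ℝ → Matrix m m R} {C D : Matrix m m R} {s : ℝ}

theorem hasDerivAt_transpose_mul_sub_transpose_mul (hC : Cᵀ = C) (hD : Dᵀ = D)
    (hY : HasDerivAt Y (C * Z s) s) (hZ : HasDerivAt Z (-(D * Y s)) s) :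
    HasDerivAt (fun t => (Y t)ᵀ * Z t - (Z t)ᵀ * Y t) 0 s := by
  refine ((hY.matrix_transpose.matrix_mul hZ).sub
    (hZ.matrix_transpose.matrix_mul hY)).congr_deriv ?_
  simp only [transpose_mul, transpose_neg, hC, hD, Matrix.neg_mul, Matrix.mul_neg,
    Matrix.mul_assoc]
  abel

theorem hasDerivAt_conjTranspose_mul_sub_conjTranspose_mul [StarRing R] [StarModule ℝ R]
    [ContinuousStar R] (hC : Cᴴ = C) (hD : Dᴴ = D)
    (hY : HasDerivAt Y (C * Z s) s) (hZ : HasDerivAt Z (-(D * Y s)) s) :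
    HasDerivAt (fun t => (Y t)ᴴ * Z t - (Z t)ᴴ * Y t) 0 s := by
  refine ((hY.matrix_conjTranspose.matrix_mul hZ).sub
    (hZ.matrix_conjTranspose.matrix_mul hY)).congr_deriv ?_
  simp only [conjTranspose_mul, conjTranspose_neg, hC, hD, Matrix.neg_mul,
    Matrix.mul_neg, Matrix.mul_assoc]
  abel

end Wronskian

theorem riccatiC_transpose (n : ℕ) : (riccatiC n)ᵀ = riccatiC n := by
  ext i j
  simp only [riccatiC, transpose_apply, of_apply, eq_comm (a := j)]
  grind

theorem riccatiC_conjTranspose (n : ℕ) : (riccatiC n)ᴴ = riccatiC n := by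
  ext i j
  simp only [riccatiC, conjTranspose_apply, of_apply, apply_ite star, star_ofNat, star_zero]
  grind

section Algebra

variable {m : Type*}

theorem Matrix.IsSymm.sub_conjTranspose {H : Matrix m m ℂ} (hH : H.IsSymm) :
    H - Hᴴ = (2 * Complex.I) • (H.map Complex.im).map (↑) := by
  ext i j
  rw [sub_apply, conjTranspose_apply, hH.apply i j]
  apply Complex.ext
  · simp
  · simp; ring

variable [Fintype m] [DecidableEq m]

theorem Matrix.isSymm_mul_inv_iff {R : Type*} [CommRing R] {Y Z : Matrix m m R} (hY : IsUnit Y) :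
    (Z * Y⁻¹).IsSymm ↔ Yᵀ * Z = Zᵀ * Y := by
  have hdet : IsUnit Y.det := (isUnit_iff_isUnit_det Y).1 hY
  have hdetT : IsUnit Yᵀ.det := by rwa [det_transpose]
  calc (Z * Y⁻¹).IsSymm ↔ Yᵀ * (Z * Y⁻¹)ᵀ * Y = Yᵀ * (Z * Y⁻¹) * Y := by
        rw [hY.mul_left_inj, ((isUnit_transpose Y).2 hY).mul_right_inj]; rfl
    _ ↔ Zᵀ * Y = Yᵀ * Z := by
        rw [transpose_mul, transpose_nonsing_inv, mul_nonsing_inv_cancel_left _ _ hdetT,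
          Matrix.mul_assoc, nonsing_inv_mul_cancel_right _ _ hdet]
    _ ↔ Yᵀ * Z = Zᵀ * Y := eq_comm

theorem Matrix.conjTranspose_mul_sub_conjTranspose_mul {R : Type*} [CommRing R] [StarRing R]
    {Y Z : Matrix m m R} (hY : IsUnit Y) :
    Yᴴ * Z - Zᴴ * Y = Yᴴ * (Z * Y⁻¹ - (Z * Y⁻¹)ᴴ) * Y := by
  have hdet : IsUnit Y.det := (isUnit_iff_isUnit_det Y).1 hY
  have hdetH : IsUnit Yᴴ.det := by rw [det_conjTranspose]; exact hdet.star
  rw [conjTranspose_mul, conjTranspose_nonsing_inv, Matrix.mul_sub, Matrix.sub_mul,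
    mul_nonsing_inv_cancel_left _ _ hdetH, Matrix.mul_assoc, nonsing_inv_mul_cancel_right _ _ hdet]

theorem Matrix.det_conjTranspose_mul_sub_conjTranspose_mul {Y Z : Matrix m m ℂ} (hY : IsUnit Y)
    (hH : (Z * Y⁻¹).IsSymm) :
    (Yᴴ * Z - Zᴴ * Y).det =
      (2 * Complex.I) ^ Fintype.card m * ↑(((Z * Y⁻¹).map Complex.im).det * ‖Y.det‖ ^ 2) := by
  rw [conjTranspose_mul_sub_conjTranspose_mul hY, hH.sub_conjTranspose, det_mul, det_mul,
    det_conjTranspose, det_smul, Complex.ofReal_mul, Complex.ofReal_pow, ← Complex.mul_conj',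
    Complex.star_def]
  have hdet_ofReal (M : Matrix m m ℝ) : (M.map (↑)).det = (M.det : ℂ) :=
    (RingHom.map_det Complex.ofRealHom M).symm
  rw [hdet_ofReal]
  ring

end Algebra

theorem det_im_H_mul_sq_abs_det_Y_const_general
    (n : ℕ) (I : Set ℝ) (hIopen : IsOpen I) (hIconn : I.OrdConnected)
    (D : ℝ → Matrix (Fin n) (Fin n) ℝ)
    (hDsymm : ∀ s ∈ I, (D s).IsSymm)
    (s₀ : ℝ) (hs₀ : s₀ ∈ I)
    (Y₀ Z₀ : Matrix (Fin n) (Fin n) ℂ) (hY₀ : IsUnit Y₀)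
    (hH₀symm : (Z₀ * Y₀⁻¹).IsSymm)
    (Y Z : ℝ → Matrix (Fin n) (Fin n) ℂ)
    (hY : ∀ s ∈ I, HasDerivAt Y (riccatiC n * Z s) s)
    (hZ : ∀ s ∈ I, HasDerivAt Z (-((D s).map (fun x => (x : ℂ)) * Y s)) s)
    (hY0 : Y s₀ = Y₀) (hZ0 : Z s₀ = Z₀)
    (hYinv : ∀ s ∈ I, IsUnit (Y s)) :
    ∀ s ∈ I,
      ((Z s * (Y s)⁻¹).map Complex.im).det * ‖(Y s).det‖ ^ 2 =
        ((Z₀ * Y₀⁻¹).map Complex.im).det * ‖Y₀.det‖ ^ 2 := by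
  intro s hs
  have hconst {F : ℝ → Matrix (Fin n) (Fin n) ℂ} (hF : ∀ t ∈ I, HasDerivAt F 0 t) : F s = F s₀ :=
    hIopen.is_const_of_deriv_eq_zero hIconn.isPreconnected
      (fun t ht => (hF t ht).differentiableAt.differentiableWithinAt) (fun t ht => (hF t ht).deriv)
      hs hs₀
  have hDT t (ht : t ∈ I) : ((D t).map (↑))ᵀ = (D t).map ((↑) : ℝ → ℂ) := (hDsymm t ht).map _
  have hDH t (ht : t ∈ I) : ((D t).map (↑))ᴴ = (D t).map ((↑) : ℝ → ℂ) := by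
    ext i j
    simp [(hDsymm t ht).apply]
  have hW₀ : (Y s₀)ᵀ * Z s₀ - (Z s₀)ᵀ * Y s₀ = 0 := by
    rw [hY0, hZ0, sub_eq_zero, ← isSymm_mul_inv_iff hY₀]
    exact hH₀symm
  have hsymm : (Z s * (Y s)⁻¹).IsSymm := by
    rw [isSymm_mul_inv_iff (hYinv s hs), ← sub_eq_zero, ← hW₀]
    exact hconst fun t ht => hasDerivAt_transpose_mul_sub_transpose_mul (riccatiC_transpose n)
      (hDT t ht) (hY t ht) (hZ t ht)
  have hdet := congrArg det <| hconst fun t ht =>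
    hasDerivAt_conjTranspose_mul_sub_conjTranspose_mul (riccatiC_conjTranspose n)
      (hDH t ht) (hY t ht) (hZ t ht)
  rw [hY0, hZ0, det_conjTranspose_mul_sub_conjTranspose_mul (hYinv s hs) hsymm,
    det_conjTranspose_mul_sub_conjTranspose_mul hY₀ hH₀symm] at hdet
  exact_mod_cast mul_left_cancel₀ (pow_ne_zero _ (by simp)) hdet

/-- If `Y, Z` solve the linear system `Y' = C Z`, `Z' = -D Y` on an
open interval `I` with `Y(ŝ₀) = Y₀` invertible, `Z(ŝ₀) = Z₀`, `H₀ = Z₀ Y₀⁻¹` symmetric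
with positive definite imaginary part, and `Y(s)` is invertible on `I`, then
`det (Im (Z(s) Y(s)⁻¹)) · |det Y(s)|² = det (Im H₀) · |det Y₀|²` for all `s ∈ I`. -/
theorem det_im_H_mul_sq_abs_det_Y_const
    (n : ℕ) (hn : 1 ≤ n) (I : Set ℝ) (hIopen : IsOpen I) (hIconn : I.OrdConnected)
    (D : ℝ → Matrix (Fin n) (Fin n) ℝ) (hDcont : ContinuousOn D I)
    (hDsymm : ∀ s ∈ I, (D s).IsSymm)
    (s₀ : ℝ) (hs₀ : s₀ ∈ I)
    (Y₀ Z₀ : Matrix (Fin n) (Fin n) ℂ) (hY₀ : IsUnit Y₀)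
    (hH₀symm : (Z₀ * Y₀⁻¹).IsSymm)
    (hH₀pos : ((Z₀ * Y₀⁻¹).map Complex.im).PosDef)
    (Y Z : ℝ → Matrix (Fin n) (Fin n) ℂ)
    (hY : ∀ s ∈ I, HasDerivAt Y (riccatiC n * Z s) s)
    (hZ : ∀ s ∈ I, HasDerivAt Z (-((D s).map (fun x => (x : ℂ)) * Y s)) s)
    (hY0 : Y s₀ = Y₀) (hZ0 : Z s₀ = Z₀)
    (hYinv : ∀ s ∈ I, IsUnit (Y s)) :
    ∀ s ∈ I,
      ((Z s * (Y s)⁻¹).map Complex.im).det * ‖(Y s).det‖ ^ 2 =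
        ((Z₀ * Y₀⁻¹).map Complex.im).det * ‖Y₀.det‖ ^ 2 :=
  det_im_H_mul_sq_abs_det_Y_const_general n I hIopen hIconn D hDsymm s₀ hs₀ Y₀ Z₀ hY₀ hH₀symm Y Z hY
    hZ hY0 hZ0 hYinv
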